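/- arXiv:1307.4886 — 2 statements merged into one kernel-verified Lean document; each statement's English description precedes it below -/
import Mathlib

section
/- Let M be a metric space that is separable and locally compact, (Ω, F, P) a probability space, and X : Ω × M → ℝ such that X(·, x) is F-measurable for each x ∈ M and X is continuous in probability (i.e., x_k → x implies X(x_k) → X(x) in probability). Then X has an (F ⊗ B(M))-measurable modification. -/
open MeasureTheory Metric Set
open scoped ENNReal NNReal RealInnerProductSpace Pointwise Manifold

noncomputable section

abbrev Euc (n : ℕ) := EuclideanSpace ℝ (Fin n)

variable {n : ℕ}

noncomputable def pderiv (i : Fin n) (f : Euc n → ℝ) : Euc n → ℝ :=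
  fun x => fderiv ℝ f x (EuclideanSpace.single i (1 : ℝ))

noncomputable def multiDeriv (α : Fin n → ℕ) (f : Euc n → ℝ) : Euc n → ℝ :=
  (List.finRange n).foldr (fun i g => (pderiv i)^[α i] g) f

def degree (α : Fin n → ℕ) : ℕ := ∑ i, α i

def IsWeakDeriv (D : Set (Euc n)) (α : Fin n → ℕ) (u g : Euc n → ℝ) : Prop :=
  ∀ φ : Euc n → ℝ, ContDiff ℝ (⊤ : ℕ∞) φ → HasCompactSupport φ → tsupport φ ⊆ D →
    ∫ x in D, u x * multiDeriv α φ x = (-1 : ℝ) ^ (degree α) * ∫ x in D, g x * φ x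

def cone (a h : ℝ) (v : Euc n) : Set (Euc n) :=
  {x | 0 < ⟪x, v⟫ ∧ ⟪x, v⟫ < h ∧ ‖x - ⟪x, v⟫ • v‖ < a * ⟪x, v⟫}

def IsConeType (D : Set (Euc n)) : Prop :=
  ∃ a h : ℝ, 0 < a ∧ 0 < h ∧
    ∃ (m : ℕ) (U : Fin m → Set (Euc n)) (v : Fin m → Euc n),
      (∀ j, IsOpen (U j)) ∧ (∀ j, ‖v j‖ = 1) ∧
      frontier D ⊆ ⋃ j, U j ∧
      ∀ j, (U j ∩ D) + cone a h (v j) ⊆ D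

def HolderClassOn (t : ℝ) (f : Euc n → ℝ) (V : Set (Euc n)) : Prop :=
  ContDiffOn ℝ (⌊t⌋₊ : ℕ) f V ∧
  ∀ α : Fin n → ℕ, degree α ≤ ⌊t⌋₊ →
    ∃ K : ℝ, (∀ x ∈ V, |multiDeriv α f x| ≤ K) ∧
      ∀ x ∈ V, ∀ y ∈ V,
        |multiDeriv α f x - multiDeriv α f y| ≤ K * ‖x - y‖ ^ (t - ⌊t⌋₊)

def LocallyHolderClassOn (t : ℝ) (f : Euc n → ℝ) (D : Set (Euc n)) : Prop :=
  ∀ x ∈ D, ∃ V, V ⊆ D ∧ IsOpen V ∧ IsConnected V ∧ x ∈ V ∧ HolderClassOn t f V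

noncomputable def sobolevNormP (p s : ℝ) (D : Set (Euc n))
    (u : Euc n → ℝ) (g : (Fin n → ℕ) → Euc n → ℝ) : ℝ≥0∞ :=
  (∫⁻ x in D, ENNReal.ofReal (|u x| ^ p)) +
  ∑' α : {α : Fin n → ℕ // degree α = ⌊s⌋₊},
    ∫⁻ q in D ×ˢ D,
      ENNReal.ofReal
        (|g α.1 q.1 - g α.1 q.2| ^ p / ‖q.1 - q.2‖ ^ ((n : ℝ) + (s - ⌊s⌋₊) * p))


open Filter in
open scoped Topology in
private lemma min_one_lip (s t : ℝ) : |min s 1 - min t 1| ≤ |s - t| := by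
  rcases min_cases s 1 with ⟨e1, l1⟩ | ⟨e1, l1⟩ <;> rcases min_cases t 1 with ⟨e2, l2⟩ | ⟨e2, l2⟩ <;>
    rw [e1, e2, abs_le] <;> rcases abs_cases (s - t) with ⟨h1, h2⟩ | ⟨h1, h2⟩ <;>
    constructor <;> linarith

open Filter
open scoped Topology

/-- On a separable locally compact metric space, a random field that is
measurable in `ω` for each fixed point and continuous in probability has a
jointly measurable modification. -/
theorem stmt17 {M : Type*} [MetricSpace M] [TopologicalSpace.SeparableSpace M]
    [LocallyCompactSpace M] [MeasurableSpace M] [BorelSpace M]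
    {Ω : Type*} [MeasurableSpace Ω] (P : Measure Ω) [IsProbabilityMeasure P]
    (X : Ω → M → ℝ)
    (hmeas : ∀ x : M, Measurable fun ω => X ω x)
    (hcip : ∀ x : M, ∀ δ : ℝ, 0 < δ →
      Filter.Tendsto (fun y => P {ω | δ < |X ω y - X ω x|}) (nhds x) (nhds 0)) :
    ∃ Y : Ω → M → ℝ,
      Measurable (Function.uncurry Y) ∧
      ∀ x : M, ∀ᵐ ω ∂P, X ω x = Y ω x := by
  classical
  rcases isEmpty_or_nonempty M with hM | hM
  · exact ⟨fun _ _ => 0, measurable_const, fun x => (IsEmpty.false x).elim⟩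
  obtain ⟨d, hd⟩ : ∃ d : ℕ → M, DenseRange d :=
    ⟨TopologicalSpace.denseSeq M, TopologicalSpace.denseRange_denseSeq M⟩
  -- the pseudometric
  set f : M → M → Ω → ℝ := fun x y ω => min |X ω x - X ω y| 1 with hf_def
  have hfmeas : ∀ x y, Measurable (f x y) := fun x y =>
    (((hmeas x).sub (hmeas y)).abs.min measurable_const)
  have hfnonneg : ∀ x y ω, 0 ≤ f x y ω := fun x y ω =>
    le_min (abs_nonneg _) zero_le_one
  have hfle : ∀ x y ω, f x y ω ≤ 1 := fun x y ω => min_le_right _ _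
  have hfint : ∀ x y, Integrable (f x y) P := by
    intro x y
    refine (integrable_const (1 : ℝ)).mono' (hfmeas x y).aestronglyMeasurable ?_
    exact Filter.Eventually.of_forall fun ω => by
      rw [Real.norm_eq_abs, abs_of_nonneg (hfnonneg x y ω)]; exact hfle x y ω
  set ρ : M → M → ℝ := fun x y => ∫ ω, f x y ω ∂P with hρ_def
  have hρ_nonneg : ∀ x y, 0 ≤ ρ x y := fun x y =>
    integral_nonneg (hfnonneg x y)
  have hρ_symm : ∀ x y, ρ x y = ρ y x := by
    intro x y
    have : ∀ ω, f x y ω = f y x ω := fun ω => by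
      simp only [hf_def]; rw [abs_sub_comm]
    simp only [hρ_def, this]
  have hρ_self : ∀ x, ρ x x = 0 := by
    intro x
    have : ∀ ω, f x x ω = 0 := fun ω => by
      simp [hf_def]
    simp only [hρ_def, this, integral_zero]
  -- basic bound via continuity in probability
  have hρ_le : ∀ x y (δ : ℝ), 0 < δ →
      ρ x y ≤ δ + (P {ω | δ < |X ω y - X ω x|}).toReal := by
    intro x y δ hδ
    set S : Set Ω := {ω | δ < |X ω y - X ω x|} with hS_def
    have hS : MeasurableSet S :=
      measurableSet_lt measurable_const ((hmeas y).sub (hmeas x)).abs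
    have hbound : ∀ ω, f x y ω ≤ δ + S.indicator (fun _ => (1 : ℝ)) ω := by
      intro ω
      by_cases h : ω ∈ S
      · rw [Set.indicator_of_mem h]
        exact le_trans (hfle x y ω) (by linarith)
      · rw [Set.indicator_of_notMem h, add_zero]
        have h' : |X ω y - X ω x| ≤ δ := not_lt.1 h
        rw [abs_sub_comm] at h'
        exact le_trans (min_le_left _ _) h'
    calc ρ x y ≤ ∫ ω, (δ + S.indicator (fun _ => (1 : ℝ)) ω) ∂P :=
          integral_mono (hfint x y)
            ((integrable_const δ).add ((integrable_const (1:ℝ)).indicator hS)) hbound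
      _ = δ + (P S).toReal := by
          rw [integral_add (integrable_const δ) ((integrable_const (1:ℝ)).indicator hS),
            integral_const, integral_indicator_const _ hS]
          simp
          rfl
  have hρ_tendsto : ∀ x, Tendsto (fun y => ρ x y) (𝓝 x) (𝓝 0) := by
    intro x
    rw [Metric.tendsto_nhds]
    intro ε hε
    have h1 := hcip x (ε/2) (by linarith)
    have h2 : Tendsto (fun y => (P {ω | ε/2 < |X ω y - X ω x|}).toReal) (𝓝 x) (𝓝 0) := by
      have := (ENNReal.tendsto_toReal (a := 0) (by simp)).comp h1
      simpa [Function.comp_def] using this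

    filter_upwards [h2.eventually_lt_const (by linarith : (0:ℝ) < ε/2)] with y hy
    rw [Real.dist_eq, sub_zero, abs_of_nonneg (hρ_nonneg x y)]
    have := hρ_le x y (ε/2) (by linarith)
    linarith
  have hρ_lip : ∀ z x y, |ρ z x - ρ z y| ≤ ρ x y := by
    intro z x y
    have heq : ρ z x - ρ z y = ∫ ω, (f z x ω - f z y ω) ∂P :=
      (integral_sub (hfint z x) (hfint z y)).symm
    rw [heq]
    have h1 : |∫ ω, (f z x ω - f z y ω) ∂P| ≤ ∫ ω, |f z x ω - f z y ω| ∂P := by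
      simpa [Real.norm_eq_abs] using
        norm_integral_le_integral_norm (fun ω => f z x ω - f z y ω) (μ := P)
    refine h1.trans (integral_mono (((hfint z x).sub (hfint z y)).abs) (hfint x y) ?_)
    intro ω
    simp only [hf_def]
    refine le_min ?_ ?_
    · refine (min_one_lip _ _).trans ?_
      refine (abs_abs_sub_abs_le_abs_sub _ _).trans ?_
      have : X ω z - X ω x - (X ω z - X ω y) = -(X ω x - X ω y) := by ring
      rw [this, abs_neg]
    · rw [abs_le]
      constructor <;>
        [linarith [hfnonneg z x ω, hfle z y ω, hfnonneg z y ω, hfle z x ω];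
         linarith [hfnonneg z x ω, hfle z y ω, hfnonneg z y ω, hfle z x ω]]
  have hρ_cont : ∀ z, Continuous (fun y => ρ z y) := by
    intro z
    rw [continuous_iff_continuousAt]
    intro x
    rw [ContinuousAt, tendsto_iff_dist_tendsto_zero]
    refine squeeze_zero (fun y => dist_nonneg) (fun y => ?_) (hρ_tendsto x)
    rw [Real.dist_eq]
    exact (hρ_lip z y x).trans_eq (hρ_symm y x)
  -- the approximating indices
  have hex : ∀ (k : ℕ) (x : M), ∃ i,
      ρ (d i) x < (1/2 : ℝ)^k ∧ dist (d i) x < 1/(k+1) := by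
    intro k x
    have hU : IsOpen ({y | ρ x y < (1/2 : ℝ)^k} ∩ ball x (1/(k+1))) :=
      (isOpen_lt (hρ_cont x) continuous_const).inter isOpen_ball
    have hxU : x ∈ {y | ρ x y < (1/2 : ℝ)^k} ∩ ball x (1/(k+1)) := by
      constructor
      · simpa [hρ_self x] using pow_pos (by norm_num : (0:ℝ) < 1/2) k
      · exact mem_ball_self (by positivity)
    obtain ⟨i, hi1, hi2⟩ := hd.exists_mem_open hU ⟨x, hxU⟩
    rw [Set.mem_setOf_eq] at hi1
    exact ⟨i, by rwa [hρ_symm (d i) x], mem_ball.1 hi2⟩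
  set s : ℕ → M → M := fun k x => d (Nat.find (hex k x)) with hs_def
  have hs_spec : ∀ k x, ρ (s k x) x < (1/2 : ℝ)^k ∧ dist (s k x) x < 1/(k+1) :=
    fun k x => Nat.find_spec (hex k x)
  have hidx_meas : ∀ k, Measurable (fun x => Nat.find (hex k x)) := by
    intro k
    refine measurable_find _ fun i => ?_
    have : IsOpen {x | ρ (d i) x < (1/2 : ℝ)^k ∧ dist (d i) x < 1/(k+1)} := by
      have h1 : IsOpen {x | ρ (d i) x < (1/2 : ℝ)^k} :=
        isOpen_lt (hρ_cont (d i)) continuous_const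
      have h2 : IsOpen {x | dist (d i) x < 1/((k:ℝ)+1)} :=
        isOpen_lt (continuous_const.dist continuous_id) continuous_const
      exact h1.inter h2
    exact this.measurableSet
  have hYk : ∀ k, Measurable (fun p : Ω × M => X p.1 (s k p.2)) := by
    intro k
    have hg : Measurable (fun q : Ω × ℕ => X q.1 (d q.2)) :=
      measurable_from_prod_countable_left (fun i => hmeas (d i))
    exact hg.comp (measurable_fst.prodMk ((hidx_meas k).comp measurable_snd))
  -- the modification
  refine ⟨fun ω x =>
    (Filter.limsup (fun k => ENNReal.ofReal (X ω (s k x))) Filter.atTop).toReal -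
    (Filter.limsup (fun k => ENNReal.ofReal (-X ω (s k x))) Filter.atTop).toReal, ?_, ?_⟩
  · apply Measurable.sub
    · exact ENNReal.measurable_toReal.comp
        (Measurable.limsup fun k => ENNReal.measurable_ofReal.comp (hYk k))
    · exact ENNReal.measurable_toReal.comp
        (Measurable.limsup fun k => ENNReal.measurable_ofReal.comp (hYk k).neg)
  · intro x
    -- Borel–Cantelli
    set B : ℕ → Set Ω := fun k => {ω | 1/((k:ℝ)+1) ≤ f (s k x) x ω} with hB_def
    have hBmeas : ∀ k, MeasurableSet (B k) :=
      fun k => measurableSet_le measurable_const (hfmeas (s k x) x)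
    have hBbound : ∀ k, (P (B k)).toReal ≤ ((k:ℝ)+1) * (1/2)^k := by
      intro k
      have hk1 : (0:ℝ) < (k:ℝ)+1 := by positivity
      have hmar := mul_meas_ge_le_integral_of_nonneg
        (Filter.Eventually.of_forall (hfnonneg (s k x) x)) (hfint (s k x) x) (1/((k:ℝ)+1))
      have h2 : (1/((k:ℝ)+1)) * (P (B k)).toReal ≤ (1/2:ℝ)^k :=
        hmar.trans (hs_spec k x).1.le
      calc (P (B k)).toReal = ((k:ℝ)+1) * ((1/((k:ℝ)+1)) * (P (B k)).toReal) := by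
            field_simp
        _ ≤ ((k:ℝ)+1) * (1/2:ℝ)^k := by
            exact mul_le_mul_of_nonneg_left h2 hk1.le
    have hsummable : Summable (fun k : ℕ => ((k:ℝ)+1) * (1/2:ℝ)^k) := by
      have h1 : Summable (fun k : ℕ => (k:ℝ) * (1/2:ℝ)^k) := by
        simpa using summable_pow_mul_geometric_of_norm_lt_one 1
          (by rw [Real.norm_eq_abs, abs_of_pos (by norm_num : (0:ℝ) < 1/2)]; norm_num : ‖(1/2:ℝ)‖ < 1)
      have h2 : Summable (fun k : ℕ => (1/2:ℝ)^k) :=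
        summable_geometric_of_lt_one (by norm_num) (by norm_num)
      exact (h1.add h2).congr fun k => by ring
    have hsum : (∑' k, P (B k)) ≠ ⊤ := by
      have hle : ∀ k, P (B k) ≤ ENNReal.ofReal (((k:ℝ)+1) * (1/2:ℝ)^k) := by
        intro k
        rw [ENNReal.le_ofReal_iff_toReal_le (measure_ne_top P _) (by positivity)]
        exact hBbound k
      refine ne_top_of_le_ne_top ?_ (ENNReal.tsum_le_tsum hle)
      rw [← ENNReal.ofReal_tsum_of_nonneg (fun k => by positivity) hsummable]
      exact ENNReal.ofReal_ne_top
    have hae := ae_eventually_notMem hsum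
    filter_upwards [hae] with ω hω
    have htend : Tendsto (fun k => X ω (s k x)) atTop (𝓝 (X ω x)) := by
      rw [tendsto_iff_dist_tendsto_zero]
      refine squeeze_zero' (Filter.Eventually.of_forall fun _ => dist_nonneg) ?_
        tendsto_one_div_add_atTop_nhds_zero_nat
      filter_upwards [hω] with k hk
      rw [Real.dist_eq]
      have hmin : f (s k x) x ω < 1/((k:ℝ)+1) := not_le.1 hk
      have hk1 : 1/((k:ℝ)+1) ≤ 1 := by
        rw [div_le_one (by positivity)]
        simp [Nat.cast_nonneg]
      rcases min_cases |X ω (s k x) - X ω x| (1:ℝ) with ⟨he, _⟩ | ⟨he, hge⟩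
      · simp only [hf_def] at hmin; rw [he] at hmin; linarith
      · simp only [hf_def] at hmin; rw [he] at hmin; linarith
    have h1 : Tendsto (fun k => ENNReal.ofReal (X ω (s k x))) atTop
        (𝓝 (ENNReal.ofReal (X ω x))) :=
      (ENNReal.continuous_ofReal.tendsto _).comp htend
    have h2 : Tendsto (fun k => ENNReal.ofReal (-X ω (s k x))) atTop
        (𝓝 (ENNReal.ofReal (-X ω x))) :=
      (ENNReal.continuous_ofReal.tendsto _).comp htend.neg
    rw [h1.limsup_eq, h2.limsup_eq]
    rcases le_total 0 (X ω x) with h | h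
    · rw [ENNReal.toReal_ofReal h, ENNReal.ofReal_of_nonpos (neg_nonpos.2 h)]
      simp
    · rw [ENNReal.ofReal_of_nonpos h, ENNReal.toReal_ofReal (neg_nonneg.2 h)]
      simp

end
end

section
/- Let D ⊂ ℝⁿ be a bounded domain and let f : D → ℝ satisfy ∫_{D×D} |f(x) − f(y)|^p / |x−y|^{n+νp} dx dy < ∞ together with f ∈ L^p(D), for p > n and 0 < ν ≤ 1 with ν > n/p. If moreover f is continuous on D, then f is γ-Hölder continuous on D for every γ < ν − n/p. -/
open MeasureTheory Metric Set
open scoped ENNReal NNReal RealInnerProductSpace Pointwise Manifold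

noncomputable section

variable {n : ℕ}

private lemma holder_lintegral {α : Type*} [MeasurableSpace α] (μ : Measure α) {S : Set α}
    {G : α → ℝ≥0∞} (hG : AEMeasurable G (μ.restrict S)) {p : ℝ} (hp : 1 < p) :
    ∫⁻ x in S, G x ∂μ ≤ (∫⁻ x in S, (G x) ^ p ∂μ) ^ (1/p) * (μ S) ^ (1 - 1/p) := by
  have hp0 : p ≠ 0 := by positivity
  have hpq : p.HolderConjugate (p / (p-1)) := Real.HolderConjugate.conjExponent hp
  have h := ENNReal.lintegral_mul_le_Lp_mul_Lq (μ.restrict S) hpq hG aemeasurable_const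
      (f := G) (g := fun _ => 1)
  simp only [Pi.mul_apply, mul_one, ENNReal.one_rpow, lintegral_one,
    Measure.restrict_apply_univ] at h
  have hq : 1 / (p / (p-1)) = 1 - 1/p := by field_simp
  rwa [hq] at h

-- Core: bound on the integral of |f u - f v| over a product of two compact subsets of D
private lemma double_integral_le {n : ℕ} {p e : ℝ} (hp : 1 < p) (he : 0 ≤ e)
    {D : Set (Euc n)} {f : Euc n → ℝ} (hcont : ContinuousOn f D)
    {IG : ℝ≥0∞} (hIGt : IG ≠ ⊤)
    (hIG : ∫⁻ q in D ×ˢ D, ENNReal.ofReal (|f q.1 - f q.2| ^ p / ‖q.1 - q.2‖ ^ e)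
        ∂(volume : Measure (Euc n × Euc n)) ≤ IG)
    {z w : Euc n} {ρ σ d : ℝ} (hρ : 0 < ρ) (hσ : 0 < σ) (hd0 : 0 ≤ d)
    (hA : closedBall z ρ ⊆ D) (hB : closedBall w σ ⊆ D)
    (hd : ∀ u ∈ closedBall z ρ, ∀ v ∈ closedBall w σ, ‖u - v‖ ≤ d) :
    ∫ u in closedBall z ρ, ∫ v in closedBall w σ, |f u - f v| ≤
      (d ^ e * IG.toReal) ^ (1/p) *
        ((volume (closedBall z ρ)).toReal * (volume (closedBall w σ)).toReal) ^ (1 - 1/p) := by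
  set A := closedBall z ρ with hAdef
  set B := closedBall w σ with hBdef
  have hp0 : (0:ℝ) < p := by linarith
  have hAc : IsCompact A := isCompact_closedBall _ _
  have hBc : IsCompact B := isCompact_closedBall _ _
  have hAm : MeasurableSet A := measurableSet_closedBall
  have hBm : MeasurableSet B := measurableSet_closedBall
  have hfA : ContinuousOn f A := hcont.mono hA
  have hfB : ContinuousOn f B := hcont.mono hB
  -- the function on the product
  have hFcont : ContinuousOn (fun q : Euc n × Euc n => f q.1 - f q.2) (A ×ˢ B) := by
    apply ContinuousOn.sub
    · exact hfA.comp continuous_fst.continuousOn (fun q hq => hq.1)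
    · exact hfB.comp continuous_snd.continuousOn (fun q hq => hq.2)
  have hFint : IntegrableOn (fun q : Euc n × Euc n => f q.1 - f q.2) (A ×ˢ B) volume :=
    hFcont.integrableOn_compact (hAc.prod hBc)
  -- rewrite as product of restricted measures
  have hmeas_eq : (volume : Measure (Euc n × Euc n)).restrict (A ×ˢ B)
      = (volume.restrict A).prod (volume.restrict B) := by
    rw [Measure.prod_restrict, ← MeasureTheory.Measure.volume_eq_prod]
  have hFint' : Integrable (fun q : Euc n × Euc n => f q.1 - f q.2)
      ((volume.restrict A).prod (volume.restrict B)) := by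
    rwa [← hmeas_eq]
  -- inner integral function
  set h : Euc n → ℝ := fun u => ∫ v in B, |f u - f v| with hhdef
  have hint : Integrable h (volume.restrict A) := by
    have := hFint'.integral_norm_prod_left
    simpa [Real.norm_eq_abs] using this
  have hnn : ∀ u, 0 ≤ h u := fun u => integral_nonneg (fun v => abs_nonneg _)
  -- pass to lintegral
  have hofReal : ENNReal.ofReal (∫ u in A, h u) = ∫⁻ u in A, ENNReal.ofReal (h u) :=
    ofReal_integral_eq_lintegral_ofReal hint (Filter.Eventually.of_forall hnn)
  have hinner : ∀ u, ENNReal.ofReal (h u) = ∫⁻ v in B, ENNReal.ofReal |f u - f v| := by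
    intro u
    apply ofReal_integral_eq_lintegral_ofReal
    · exact (((continuous_const.continuousOn).sub hfB).abs).integrableOn_compact hBc
    · exact Filter.Eventually.of_forall (fun v => abs_nonneg _)
  -- Fubini for lintegral
  set G : Euc n × Euc n → ℝ≥0∞ := fun q => ENNReal.ofReal |f q.1 - f q.2| with hGdef
  have hGmeas : AEMeasurable G ((volume : Measure (Euc n × Euc n)).restrict (A ×ˢ B)) := by
    apply ContinuousOn.aemeasurable _ (hAm.prod hBm)
    exact ENNReal.continuous_ofReal.comp_continuousOn hFcont.abs
  have hGmeas' : AEMeasurable G ((volume.restrict A).prod (volume.restrict B)) := by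
    rwa [← hmeas_eq]
  have hFub : ∫⁻ u in A, ∫⁻ v in B, ENNReal.ofReal |f u - f v|
      = ∫⁻ q in A ×ˢ B, G q ∂(volume : Measure (Euc n × Euc n)) := by
    rw [hmeas_eq, lintegral_prod G hGmeas']
  -- Hölder inequality
  have hHold := holder_lintegral (volume : Measure (Euc n × Euc n)) hGmeas hp
  have hGp : ∀ q : Euc n × Euc n, G q ^ p = ENNReal.ofReal (|f q.1 - f q.2| ^ p) :=
    fun q => ENNReal.ofReal_rpow_of_nonneg (abs_nonneg _) hp0.le
  have hptw : ∀ q ∈ A ×ˢ B, ENNReal.ofReal (|f q.1 - f q.2| ^ p) ≤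
      ENNReal.ofReal (d ^ e) * ENNReal.ofReal (|f q.1 - f q.2| ^ p / ‖q.1 - q.2‖ ^ e) := by
    intro q hq
    rcases eq_or_ne q.1 q.2 with heq | hne
    · rw [heq]
      simp [Real.zero_rpow (ne_of_gt hp0)]
    · have hq0 : (0:ℝ) < ‖q.1 - q.2‖ := by
        rw [norm_pos_iff]; exact sub_ne_zero.mpr hne
      have hqe : (0:ℝ) < ‖q.1 - q.2‖ ^ e := Real.rpow_pos_of_pos hq0 e
      have hYd : ‖q.1 - q.2‖ ^ e ≤ d ^ e :=
        Real.rpow_le_rpow hq0.le (hd q.1 hq.1 q.2 hq.2) he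
      rw [← ENNReal.ofReal_mul (by positivity)]
      apply ENNReal.ofReal_le_ofReal
      have h1 : (1:ℝ) ≤ d ^ e / ‖q.1 - q.2‖ ^ e := (one_le_div hqe).mpr hYd
      calc |f q.1 - f q.2| ^ p = |f q.1 - f q.2| ^ p * 1 := (mul_one _).symm
        _ ≤ |f q.1 - f q.2| ^ p * (d ^ e / ‖q.1 - q.2‖ ^ e) := by
            have : (0:ℝ) ≤ |f q.1 - f q.2| ^ p := by positivity
            exact mul_le_mul_of_nonneg_left h1 this
        _ = d ^ e * (|f q.1 - f q.2| ^ p / ‖q.1 - q.2‖ ^ e) := by ring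
  have hchain : ∫⁻ q in A ×ˢ B, G q ^ p ∂(volume : Measure (Euc n × Euc n)) ≤
      ENNReal.ofReal (d ^ e) * IG := by
    calc ∫⁻ q in A ×ˢ B, G q ^ p ∂(volume : Measure (Euc n × Euc n))
        = ∫⁻ q in A ×ˢ B, ENNReal.ofReal (|f q.1 - f q.2| ^ p)
            ∂(volume : Measure (Euc n × Euc n)) := by simp_rw [hGp]
      _ ≤ ∫⁻ q in A ×ˢ B, ENNReal.ofReal (d ^ e) *
            ENNReal.ofReal (|f q.1 - f q.2| ^ p / ‖q.1 - q.2‖ ^ e)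
            ∂(volume : Measure (Euc n × Euc n)) :=
          lintegral_mono_ae (ae_restrict_of_forall_mem (hAm.prod hBm) hptw)
      _ = ENNReal.ofReal (d ^ e) * ∫⁻ q in A ×ˢ B,
            ENNReal.ofReal (|f q.1 - f q.2| ^ p / ‖q.1 - q.2‖ ^ e)
            ∂(volume : Measure (Euc n × Euc n)) :=
          lintegral_const_mul' _ _ ENNReal.ofReal_ne_top
      _ ≤ ENNReal.ofReal (d ^ e) * IG :=
          mul_le_mul_right ((lintegral_mono_set (Set.prod_mono hA hB)).trans hIG) _
  have hvol : (volume : Measure (Euc n × Euc n)) (A ×ˢ B) = volume A * volume B := by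
    rw [MeasureTheory.Measure.volume_eq_prod, Measure.prod_prod]
  have hp1le : (0:ℝ) ≤ 1 - 1/p := by
    have : 1/p ≤ 1 := by
      rw [div_le_one hp0]; linarith
    linarith
  have hENN : ENNReal.ofReal (∫ u in A, h u) ≤
      (ENNReal.ofReal (d ^ e) * IG) ^ (1/p) * (volume A * volume B) ^ (1 - 1/p) := by
    rw [hofReal]
    calc ∫⁻ u in A, ENNReal.ofReal (h u)
        = ∫⁻ q in A ×ˢ B, G q ∂(volume : Measure (Euc n × Euc n)) := by
          simp_rw [hinner]; exact hFub
      _ ≤ (∫⁻ q in A ×ˢ B, G q ^ p ∂(volume : Measure (Euc n × Euc n))) ^ (1/p) *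
            ((volume : Measure (Euc n × Euc n)) (A ×ˢ B)) ^ (1 - 1/p) := hHold
      _ ≤ (ENNReal.ofReal (d ^ e) * IG) ^ (1/p) * (volume A * volume B) ^ (1 - 1/p) := by
          rw [hvol]
          exact mul_le_mul_left (ENNReal.rpow_le_rpow hchain (by positivity)) _
  have hAfin : volume A ≠ ⊤ := measure_closedBall_lt_top.ne
  have hBfin : volume B ≠ ⊤ := measure_closedBall_lt_top.ne
  have hfin : (ENNReal.ofReal (d ^ e) * IG) ^ (1/p) * (volume A * volume B) ^ (1 - 1/p) ≠ ⊤ := by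
    apply ENNReal.mul_ne_top
    · exact (ENNReal.rpow_lt_top_of_nonneg (by positivity)
        (ENNReal.mul_ne_top ENNReal.ofReal_ne_top hIGt)).ne
    · exact (ENNReal.rpow_lt_top_of_nonneg hp1le (ENNReal.mul_ne_top hAfin hBfin)).ne
  have hfinal := ENNReal.toReal_mono hfin hENN
  rw [ENNReal.toReal_ofReal (integral_nonneg hnn)] at hfinal
  rw [ENNReal.toReal_mul, ← ENNReal.toReal_rpow, ← ENNReal.toReal_rpow,
    ENNReal.toReal_mul, ENNReal.toReal_ofReal (by positivity), ENNReal.toReal_mul] at hfinal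
  exact hfinal

private lemma avg_diff_le {n : ℕ} {p e : ℝ} (hp : 1 < p) (he : 0 ≤ e)
    {D : Set (Euc n)} {f : Euc n → ℝ} (hcont : ContinuousOn f D)
    {IG : ℝ≥0∞} (hIGt : IG ≠ ⊤)
    (hIG : ∫⁻ q in D ×ˢ D, ENNReal.ofReal (|f q.1 - f q.2| ^ p / ‖q.1 - q.2‖ ^ e)
        ∂(volume : Measure (Euc n × Euc n)) ≤ IG)
    {z w : Euc n} {ρ σ d : ℝ} (hρ : 0 < ρ) (hσ : 0 < σ) (hd0 : 0 ≤ d)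
    (hA : closedBall z ρ ⊆ D) (hB : closedBall w σ ⊆ D)
    (hd : ∀ u ∈ closedBall z ρ, ∀ v ∈ closedBall w σ, ‖u - v‖ ≤ d) :
    |((volume (closedBall z ρ)).toReal)⁻¹ * (∫ u in closedBall z ρ, f u) -
      ((volume (closedBall w σ)).toReal)⁻¹ * (∫ u in closedBall w σ, f u)| ≤
      (d ^ e * IG.toReal) ^ (1/p) /
        ((volume (closedBall z ρ)).toReal * (volume (closedBall w σ)).toReal) ^ (1/p) := by
  set A := closedBall z ρ with hAdef
  set B := closedBall w σ with hBdef
  set vA := (volume A).toReal with hvAdef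
  set vB := (volume B).toReal with hvBdef
  have hAc : IsCompact A := isCompact_closedBall _ _
  have hBc : IsCompact B := isCompact_closedBall _ _
  have hAm : MeasurableSet A := measurableSet_closedBall
  have hfA : ContinuousOn f A := hcont.mono hA
  have hfB : ContinuousOn f B := hcont.mono hB
  have hvA : 0 < vA := ENNReal.toReal_pos (measure_closedBall_pos volume z hρ).ne'
    measure_closedBall_lt_top.ne
  have hvB : 0 < vB := ENNReal.toReal_pos (measure_closedBall_pos volume w hσ).ne'
    measure_closedBall_lt_top.ne
  have intA : IntegrableOn f A := hfA.integrableOn_compact hAc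
  have intB : IntegrableOn f B := hfB.integrableOn_compact hBc
  set c : ℝ := vB⁻¹ * ∫ v in B, f v with hcdef
  -- inner integral function and its integrability
  set h : Euc n → ℝ := fun u => ∫ v in B, |f u - f v| with hhdef
  have hFcont : ContinuousOn (fun q : Euc n × Euc n => f q.1 - f q.2) (A ×ˢ B) := by
    apply ContinuousOn.sub
    · exact hfA.comp continuous_fst.continuousOn (fun q hq => hq.1)
    · exact hfB.comp continuous_snd.continuousOn (fun q hq => hq.2)
  have hFint : IntegrableOn (fun q : Euc n × Euc n => f q.1 - f q.2) (A ×ˢ B) volume :=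
    hFcont.integrableOn_compact (hAc.prod hBc)
  have hmeas_eq : (volume : Measure (Euc n × Euc n)).restrict (A ×ˢ B)
      = (volume.restrict A).prod (volume.restrict B) := by
    rw [Measure.prod_restrict, ← MeasureTheory.Measure.volume_eq_prod]
  have hFint' : Integrable (fun q : Euc n × Euc n => f q.1 - f q.2)
      ((volume.restrict A).prod (volume.restrict B)) := by rwa [← hmeas_eq]
  have hint : Integrable h (volume.restrict A) := by
    have := hFint'.integral_norm_prod_left
    simpa [Real.norm_eq_abs] using this
  -- pointwise bound on A
  have key1 : ∀ u ∈ A, |f u - c| ≤ vB⁻¹ * h u := by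
    intro u hu
    have hfu : IntegrableOn (fun v => f u - f v) B :=
      (continuous_const.continuousOn.sub hfB).integrableOn_compact hBc
    have hsplit : ∫ v in B, (f u - f v) = vB * f u - ∫ v in B, f v := by
      rw [integral_sub (by exact integrableOn_const measure_closedBall_lt_top.ne : IntegrableOn (fun _ => f u) B volume) intB]
      simp [setIntegral_const, smul_eq_mul, measureReal_def, hvBdef]
    have heq : f u - c = vB⁻¹ * ∫ v in B, (f u - f v) := by
      rw [hsplit, hcdef]; field_simp
    rw [heq, abs_mul, abs_of_pos (inv_pos.mpr hvB)]
    apply mul_le_mul_of_nonneg_left _ (inv_pos.mpr hvB).le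
    calc |∫ v in B, (f u - f v)| ≤ ∫ v in B, |f u - f v| := by
          simpa [Real.norm_eq_abs] using norm_integral_le_integral_norm
            (μ := volume.restrict B) (fun v => f u - f v)
      _ = h u := rfl
  -- average difference identity
  have key2 : vA⁻¹ * (∫ u in A, f u) - c = vA⁻¹ * ∫ u in A, (f u - c) := by
    rw [integral_sub intA (integrableOn_const measure_closedBall_lt_top.ne)]
    rw [setIntegral_const, smul_eq_mul, measureReal_def, ← hvAdef]
    field_simp
  have key3 : |vA⁻¹ * (∫ u in A, f u) - c| ≤ vA⁻¹ * (vB⁻¹ * ∫ u in A, h u) := by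
    rw [key2, abs_mul, abs_of_pos (inv_pos.mpr hvA)]
    apply mul_le_mul_of_nonneg_left _ (inv_pos.mpr hvA).le
    calc |∫ u in A, (f u - c)| ≤ ∫ u in A, |f u - c| := by
          simpa [Real.norm_eq_abs] using norm_integral_le_integral_norm
            (μ := volume.restrict A) (fun u => f u - c)
      _ ≤ ∫ u in A, vB⁻¹ * h u := by
          apply setIntegral_mono_on _ (hint.const_mul _) hAm key1
          exact ((hfA.sub continuous_const.continuousOn).abs).integrableOn_compact hAc
      _ = vB⁻¹ * ∫ u in A, h u := integral_const_mul _ _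
  -- apply the double-integral bound
  have hdouble := double_integral_le hp he hcont hIGt hIG hρ hσ hd0 hA hB hd
  have hfinal : |vA⁻¹ * (∫ u in A, f u) - c| ≤
      vA⁻¹ * (vB⁻¹ * ((d ^ e * IG.toReal) ^ (1/p) * (vA * vB) ^ (1 - 1/p))) := by
    refine key3.trans ?_
    apply mul_le_mul_of_nonneg_left _ (inv_pos.mpr hvA).le
    exact mul_le_mul_of_nonneg_left hdouble (inv_pos.mpr hvB).le
  refine hfinal.trans (le_of_eq ?_)
  have hsub : (vA * vB) ^ ((1:ℝ) - 1/p) = (vA * vB) / (vA * vB) ^ (1/p) := by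
    rw [Real.rpow_sub (by positivity), Real.rpow_one]
  rw [hsub]
  have hpos : (0:ℝ) < (vA * vB) ^ (1/p) := Real.rpow_pos_of_pos (by positivity) _
  field_simp

private lemma avg_abs_le {n : ℕ} {p : ℝ} (hp : 1 < p)
    {D : Set (Euc n)} {f : Euc n → ℝ} (hcont : ContinuousOn f D)
    {IL : ℝ≥0∞} (hILt : IL ≠ ⊤)
    (hIL : ∫⁻ x in D, ENNReal.ofReal (|f x| ^ p) ≤ IL)
    {z : Euc n} {ρ : ℝ} (hρ : 0 < ρ) (hA : closedBall z ρ ⊆ D) :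
    |((volume (closedBall z ρ)).toReal)⁻¹ * (∫ u in closedBall z ρ, f u)| ≤
      IL.toReal ^ (1/p) / ((volume (closedBall z ρ)).toReal) ^ (1/p) := by
  set A := closedBall z ρ with hAdef
  set vA := (volume A).toReal with hvAdef
  have hp0 : (0:ℝ) < p := by linarith
  have hAc : IsCompact A := isCompact_closedBall _ _
  have hAm : MeasurableSet A := measurableSet_closedBall
  have hfA : ContinuousOn f A := hcont.mono hA
  have hvA : 0 < vA := ENNReal.toReal_pos (measure_closedBall_pos volume z hρ).ne'
    measure_closedBall_lt_top.ne
  have intA : IntegrableOn f A := hfA.integrableOn_compact hAc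
  have intAabs : IntegrableOn (fun u => |f u|) A := hfA.abs.integrableOn_compact hAc
  have h1 : |∫ u in A, f u| ≤ ∫ u in A, |f u| := by
    simpa [Real.norm_eq_abs] using norm_integral_le_integral_norm (μ := volume.restrict A) f
  -- lintegral bound
  have hGmeas : AEMeasurable (fun u => ENNReal.ofReal |f u|) (volume.restrict A) :=
    ENNReal.continuous_ofReal.comp_continuousOn hfA.abs |>.aemeasurable hAm
  have hofReal : ENNReal.ofReal (∫ u in A, |f u|) = ∫⁻ u in A, ENNReal.ofReal |f u| :=
    ofReal_integral_eq_lintegral_ofReal intAabs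
      (Filter.Eventually.of_forall (fun u => abs_nonneg _))
  have hHold := holder_lintegral (volume : Measure (Euc n)) hGmeas hp
  have hGp : ∀ u : Euc n, (ENNReal.ofReal |f u|) ^ p = ENNReal.ofReal (|f u| ^ p) :=
    fun u => ENNReal.ofReal_rpow_of_nonneg (abs_nonneg _) hp0.le
  have hchain : ∫⁻ u in A, (ENNReal.ofReal |f u|) ^ p ≤ IL := by
    calc ∫⁻ u in A, (ENNReal.ofReal |f u|) ^ p
        = ∫⁻ u in A, ENNReal.ofReal (|f u| ^ p) := by simp_rw [hGp]
      _ ≤ ∫⁻ u in D, ENNReal.ofReal (|f u| ^ p) := lintegral_mono_set hA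
      _ ≤ IL := hIL
  have hp1le : (0:ℝ) ≤ 1 - 1/p := by
    have : 1/p ≤ 1 := by rw [div_le_one hp0]; linarith
    linarith
  have hENN : ENNReal.ofReal (∫ u in A, |f u|) ≤ IL ^ (1/p) * (volume A) ^ (1 - 1/p) := by
    rw [hofReal]
    refine hHold.trans ?_
    exact mul_le_mul_left (ENNReal.rpow_le_rpow hchain (by positivity)) _
  have hfin : IL ^ (1/p) * (volume A) ^ (1 - 1/p) ≠ ⊤ :=
    ENNReal.mul_ne_top (ENNReal.rpow_lt_top_of_nonneg (by positivity) hILt).ne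
      (ENNReal.rpow_lt_top_of_nonneg hp1le measure_closedBall_lt_top.ne).ne
  have h2 := ENNReal.toReal_mono hfin hENN
  rw [ENNReal.toReal_ofReal (integral_nonneg (fun u => abs_nonneg _))] at h2
  rw [ENNReal.toReal_mul, ← ENNReal.toReal_rpow, ← ENNReal.toReal_rpow] at h2
  have hsub : vA ^ ((1:ℝ) - 1/p) = vA / vA ^ (1/p) := by
    rw [Real.rpow_sub hvA, Real.rpow_one]
  calc |vA⁻¹ * ∫ u in A, f u| = vA⁻¹ * |∫ u in A, f u| := by
        rw [abs_mul, abs_of_pos (inv_pos.mpr hvA)]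
    _ ≤ vA⁻¹ * ∫ u in A, |f u| := mul_le_mul_of_nonneg_left h1 (inv_pos.mpr hvA).le
    _ ≤ vA⁻¹ * (IL.toReal ^ (1/p) * vA ^ (1 - 1/p)) :=
        mul_le_mul_of_nonneg_left h2 (inv_pos.mpr hvA).le
    _ = IL.toReal ^ (1/p) / vA ^ (1/p) := by
        rw [hsub]
        have hpos : (0:ℝ) < vA ^ (1/p) := Real.rpow_pos_of_pos hvA _
        field_simp

private lemma gsum {x : ℝ} (h0 : 0 ≤ x) (h1 : x < 1) (m : ℕ) :
    ∑ i ∈ Finset.range m, x ^ i ≤ (1 - x)⁻¹ := by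
  rw [geom_sum_eq (by nlinarith) m]
  have hx1 : 0 < 1 - x := by linarith
  have hpm : 0 ≤ x ^ m := pow_nonneg h0 m
  rw [div_le_iff_of_neg (by linarith : x - 1 < 0)]
  have : (1 - x)⁻¹ * (1 - x) = 1 := inv_mul_cancel₀ (by linarith)
  nlinarith [this]


private lemma vol_cball {n : ℕ} (z : Euc n) {ρ : ℝ} (h : 0 ≤ ρ) :
    (volume (closedBall z ρ)).toReal = ρ ^ n * (volume (ball (0 : Euc n) 1)).toReal := by
  rw [Measure.addHaar_closedBall volume z h, finrank_euclideanSpace_fin,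
    ENNReal.toReal_mul, ENNReal.toReal_ofReal (by positivity)]


private lemma ball_in_cone {n : ℕ} {a h : ℝ} (ha : 0 < a) (hh : 0 < h)
    {v : Euc n} (hv : ‖v‖ = 1) {r : ℝ} (hr : 0 < r) (hrh : r ≤ h) :
    closedBall ((r/2) • v) (min a 1 / 8 * r) ⊆ cone a h v ∩ ball 0 r := by
  intro y hy
  rw [mem_closedBall, dist_eq_norm] at hy
  set c : ℝ := min a 1 / 8 with hcdef
  have hca : c ≤ a / 8 := by
    have := min_le_left a 1; rw [hcdef]; linarith
  have hc1 : c ≤ 1 / 8 := by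
    have := min_le_right a 1; rw [hcdef]; linarith
  have hc0 : 0 < c := by rw [hcdef]; have := lt_min ha one_pos; positivity
  set t : ℝ := ⟪y, v⟫ with htdef
  have hvv : ⟪v, v⟫ = (1:ℝ) := by
    rw [real_inner_self_eq_norm_mul_norm, hv]; ring
  have hdiff : t - r/2 = ⟪y - (r/2) • v, v⟫ := by
    rw [inner_sub_left, real_inner_smul_left, hvv, htdef]; ring
  have ht : |t - r/2| ≤ c * r := by
    rw [hdiff]
    calc |⟪y - (r/2) • v, v⟫| ≤ ‖y - (r/2) • v‖ * ‖v‖ := abs_real_inner_le_norm _ _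
      _ = ‖y - (r/2) • v‖ := by rw [hv, mul_one]
      _ ≤ c * r := hy
  have hcr : c * r ≤ r / 8 := by nlinarith
  have habs := abs_le.mp ht
  have ht38 : 3 * r / 8 ≤ t := by linarith [habs.1]
  have ht58 : t ≤ 5 * r / 8 := by linarith [habs.2]
  have ht0 : 0 < t := by linarith
  have hth : t < h := by linarith
  have hid : y - t • v = (y - (r/2) • v) + ((r/2 - t)) • v := by
    rw [sub_smul]; abel
  have hnorm : ‖y - t • v‖ ≤ 2 * (c * r) := by
    rw [hid]
    calc ‖(y - (r/2) • v) + ((r/2 - t)) • v‖ ≤ ‖y - (r/2) • v‖ + ‖((r/2 - t)) • v‖ :=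
          norm_add_le _ _
      _ = ‖y - (r/2) • v‖ + |r/2 - t| := by rw [norm_smul, hv, mul_one, Real.norm_eq_abs]
      _ ≤ c * r + c * r := by
          have : |r/2 - t| = |t - r/2| := abs_sub_comm _ _
          rw [this]; linarith
      _ = 2 * (c * r) := by ring
  have hcone : ‖y - t • v‖ < a * t := by
    have h1 : 2 * (c * r) ≤ a * r / 4 := by nlinarith
    have h2 : a * r / 4 < a * (3 * r / 8) := by nlinarith
    have h3 : a * (3 * r / 8) ≤ a * t := by nlinarith
    linarith
  have hny : ‖y‖ < r := by
    have : ‖y‖ ≤ ‖y - (r/2) • v‖ + ‖(r/2 : ℝ) • v‖ := by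
      calc ‖y‖ = ‖(y - (r/2) • v) + (r/2 : ℝ) • v‖ := by rw [sub_add_cancel]
        _ ≤ _ := norm_add_le _ _
    rw [norm_smul, hv, mul_one, Real.norm_eq_abs, abs_of_pos (by positivity : (0:ℝ) < r/2)]
      at this
    linarith
  exact ⟨⟨ht0, hth, hcone⟩, by rwa [mem_ball, dist_zero_right]⟩

private lemma cone_ball {n : ℕ} {D : Set (Euc n)} (hopen : IsOpen D)
    (hbdd : Bornology.IsBounded D) (hcone : IsConeType D) (hn : n ≠ 0) :
    ∃ c r0 : ℝ, 0 < c ∧ c < 1 ∧ 0 < r0 ∧ r0 ≤ 1 ∧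
      ∀ x ∈ D, ∀ r : ℝ, 0 < r → r ≤ r0 → ∃ z, closedBall z (c * r) ⊆ D ∩ ball x r := by
  obtain ⟨a, h, ha, hh, m, U, v, hU, hv, hcover, hsub⟩ := hcone
  -- Lebesgue number for the covering of the compact frontier
  have hfc : IsCompact (frontier D) :=
    (hbdd.isCompact_closure).of_isClosed_subset isClosed_frontier frontier_subset_closure
  obtain ⟨δ, hδ0, hδ⟩ := lebesgue_number_lemma_of_metric hfc hU hcover
  set c : ℝ := min a 1 / 8 with hcdef
  have hc0 : 0 < c := by rw [hcdef]; have := lt_min ha one_pos; positivity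
  have hc1 : c < 1 := by
    rw [hcdef]; have := min_le_right a 1; linarith
  refine ⟨c, min (min h 1) δ, hc0, hc1, by positivity, le_trans (min_le_left _ _)
    (le_trans (min_le_right _ _) le_rfl), ?_⟩
  intro x hx r hr hrle
  have hrh : r ≤ h := le_trans hrle (le_trans (min_le_left _ _) (min_le_left _ _))
  have hrδ : r ≤ δ := le_trans hrle (min_le_right _ _)
  by_cases hball : ball x r ⊆ D
  · refine ⟨x, ?_⟩
    intro y hy
    have : y ∈ ball x r := by
      rw [mem_closedBall] at hy
      rw [mem_ball]
      have : c * r < r := by nlinarith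
      linarith [hy]
    exact ⟨hball this, this⟩
  · -- x is close to the frontier
    obtain ⟨w, hw1, hw2⟩ : ∃ w, w ∈ ball x r ∧ w ∈ Dᶜ := by
      by_contra hno
      push_neg at hno
      exact hball (fun w hw => by_contra (fun hwD => (hno w hw) hwD))
    have hDc : Dᶜ.Nonempty := ⟨w, hw2⟩
    have hDcc : IsClosed Dᶜ := hopen.isClosed_compl
    obtain ⟨z₀, hz₀mem, hz₀d⟩ := hDcc.exists_infDist_eq_dist hDc x
    have hinf_lt : infDist x Dᶜ < r :=
      lt_of_le_of_lt (infDist_le_dist_of_mem hw2) (by rwa [mem_ball, dist_comm] at hw1)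
    have hinf_pos : 0 < infDist x Dᶜ :=
      (hDcc.notMem_iff_infDist_pos hDc).mp (fun hc => hc hx)
    -- the closest point is on the frontier
    have hz₀x : z₀ ≠ x := by
      intro hzz
      rw [hzz] at hz₀mem; exact hz₀mem hx
    have hz₀cl : z₀ ∈ closure D := by
      have hseq : ∀ s : ℝ, 0 ≤ s → s < 1 → x + s • (z₀ - x) ∈ D := by
        intro s hs0 hs1
        by_contra hnot
        have : infDist x Dᶜ ≤ dist x (x + s • (z₀ - x)) := infDist_le_dist_of_mem hnot
        rw [dist_eq_norm] at this
        have hxz : x - (x + s • (z₀ - x)) = (-s) • (z₀ - x) := by module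
        rw [hxz, norm_smul, Real.norm_eq_abs, abs_neg, abs_of_nonneg hs0] at this
        have hzx0 : 0 < ‖z₀ - x‖ := by
          rw [norm_pos_iff]; exact sub_ne_zero.mpr hz₀x
        have hd : infDist x Dᶜ = ‖z₀ - x‖ := by
          rw [hz₀d, dist_eq_norm, norm_sub_rev]
        rw [hd] at this
        nlinarith
      apply mem_closure_of_tendsto (f := fun k : ℕ => x + ((k:ℝ)/((k:ℝ)+1)) • (z₀ - x))
        (b := Filter.atTop)
      · have h1 : Filter.Tendsto (fun k : ℕ => (k:ℝ)/((k:ℝ)+1)) Filter.atTop (nhds 1) :=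
          tendsto_natCast_div_add_atTop (1:ℝ)
        have h2 : Filter.Tendsto (fun s : ℝ => x + s • (z₀ - x)) (nhds 1) (nhds z₀) := by
          have : Continuous (fun s : ℝ => x + s • (z₀ - x)) := by continuity
          have h3 := this.tendsto 1
          simpa using h3
        exact h2.comp h1
      · apply Filter.Eventually.of_forall
        intro k
        exact (hseq ((k:ℝ)/((k:ℝ)+1)) (by positivity)
          (by rw [div_lt_one (by positivity)]; linarith))
    have hz₀f : z₀ ∈ frontier D := by
      rw [hopen.frontier_eq]
      exact ⟨hz₀cl, hz₀mem⟩
    -- x lies in one of the covering sets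
    obtain ⟨j, hj⟩ := hδ z₀ hz₀f
    have hxU : x ∈ U j := by
      apply hj
      rw [mem_ball, ← hz₀d]
      exact lt_of_lt_of_le hinf_lt hrδ
    -- translate the cone
    have hconetrans : ∀ y ∈ cone a h (v j), x + y ∈ D := by
      intro y hy
      exact hsub j (Set.add_mem_add ⟨hxU, hx⟩ hy)
    refine ⟨x + (r/2) • v j, ?_⟩
    intro y hy
    have hy' : y - x ∈ closedBall ((r/2) • v j) (c * r) := by
      rw [mem_closedBall, dist_eq_norm] at hy ⊢
      have : y - x - (r/2) • v j = y - (x + (r/2) • v j) := by module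
      rw [this]; exact hy
    have := ball_in_cone ha hh (hv j) hr hrh hy'
    obtain ⟨hc, hb⟩ := this
    constructor
    · have := hconetrans _ hc
      simpa using this
    · rw [mem_ball, dist_eq_norm]
      rw [mem_ball, dist_zero_right] at hb
      simpa using hb

-- MAIN THEOREM PART (appended to defs + aux lemmas)

set_option maxHeartbeats 2000000 in
/-- Zero-order Sobolev embedding: a continuous function on a bounded domain of
cone type with finite `L^p` norm and finite Gagliardo seminorm of order `ν`
(`p > n`, `n/p < ν ≤ 1`) is `γ`-Hölder continuous for every `γ < ν - n/p`. -/
theorem stmt19 {n : ℕ} (D : Set (Euc n)) (hne : D.Nonempty) (hopen : IsOpen D)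
    (hconn : IsConnected D) (hbdd : Bornology.IsBounded D) (hcone : IsConeType D)
    (f : Euc n → ℝ) (p ν : ℝ) (hp : (n : ℝ) < p) (hν0 : 0 < ν) (hν1 : ν ≤ 1)
    (hνp : (n : ℝ) / p < ν)
    (hLp : ∫⁻ x in D, ENNReal.ofReal (|f x| ^ p) < ⊤)
    (hGag : ∫⁻ q in D ×ˢ D,
        ENNReal.ofReal (|f q.1 - f q.2| ^ p / ‖q.1 - q.2‖ ^ ((n : ℝ) + ν * p))
        ∂(volume : Measure (Euc n × Euc n)) < ⊤)
    (hcont : ContinuousOn f D) :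
    ∀ γ : ℝ, 0 < γ → γ < ν - (n : ℝ) / p →
      ∃ K : ℝ, 0 ≤ K ∧ ∀ x ∈ D, ∀ y ∈ D, |f x - f y| ≤ K * ‖x - y‖ ^ γ := by
  intro γ hγ0 hγσ
  by_cases hn0 : n = 0
  · subst hn0
    refine ⟨0, le_rfl, ?_⟩
    intro x hx y hy
    have hxy : x = y := Subsingleton.elim x y
    subst hxy
    simp
  -- main case n ≥ 1
  have hn1 : (1:ℝ) ≤ n := by exact_mod_cast Nat.one_le_iff_ne_zero.mpr hn0
  have hp1 : 1 < p := lt_of_le_of_lt hn1 hp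
  have hp0 : (0:ℝ) < p := by linarith
  set σ : ℝ := ν - (n:ℝ)/p with hσdef
  have hσ0 : 0 < σ := by
    rw [hσdef]; linarith
  set e : ℝ := (n:ℝ) + ν * p with hedef
  have he : 0 ≤ e := by rw [hedef]; positivity
  set IG : ℝ≥0∞ := ∫⁻ q in D ×ˢ D,
      ENNReal.ofReal (|f q.1 - f q.2| ^ p / ‖q.1 - q.2‖ ^ e)
      ∂(volume : Measure (Euc n × Euc n)) with hIGdef
  have hIGt : IG ≠ ⊤ := hGag.ne
  have hIGle : ∫⁻ q in D ×ˢ D, ENNReal.ofReal (|f q.1 - f q.2| ^ p / ‖q.1 - q.2‖ ^ e)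
      ∂(volume : Measure (Euc n × Euc n)) ≤ IG := le_rfl
  set IL : ℝ≥0∞ := ∫⁻ x in D, ENNReal.ofReal (|f x| ^ p) with hILdef
  have hILt : IL ≠ ⊤ := hLp.ne
  set IGr : ℝ := IG.toReal with hIGrdef
  have hIGr0 : 0 ≤ IGr := ENNReal.toReal_nonneg
  -- geometry
  obtain ⟨c, r0, hc0, hc1, hr00, hr01, hball⟩ := cone_ball hopen hbdd hcone hn0
  have hZex : ∀ x : Euc n, ∀ r : ℝ, ∃ z : Euc n,
      (x ∈ D → 0 < r → r ≤ r0 → closedBall z (c*r) ⊆ D ∩ ball x r) := by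
    intro x r
    by_cases hx : x ∈ D ∧ 0 < r ∧ r ≤ r0
    · obtain ⟨z, hz⟩ := hball x hx.1 r hx.2.1 hx.2.2
      exact ⟨z, fun _ _ _ => hz⟩
    · exact ⟨0, fun h1 h2 h3 => absurd ⟨h1, h2, h3⟩ hx⟩
  choose Z hZ using hZex
  set V1 : ℝ := (volume (ball (0:Euc n) (1:ℝ))).toReal with hV1def
  have hV1 : 0 < V1 := ENNReal.toReal_pos (measure_ball_pos volume 0 one_pos).ne'
    measure_ball_lt_top.ne
  set Avg : Euc n → ℝ → ℝ := fun x t =>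
    ((volume (closedBall (Z x t) (c*t))).toReal)⁻¹ * ∫ u in closedBall (Z x t) (c*t), f u
    with hAvg
  set Q0 : ℝ := 3^e * IGr / (((c/2)^n*V1) * ((c/2)^n*V1)) with hQ0def
  have hQ00 : 0 ≤ Q0 := by
    rw [hQ0def]
    have h3 : (0:ℝ) < 3^e := Real.rpow_pos_of_pos (by norm_num) _
    positivity
  set Q : ℝ := Q0 ^ (1/p) with hQdef
  have hQ0 : 0 ≤ Q := Real.rpow_nonneg hQ00 _
  have hexp : (e - 2*(n:ℝ)) * (1/p) = σ := by
    rw [hedef, hσdef]; field_simp; ring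
  -- main pairwise step estimate
  have hstep : ∀ x1 ∈ D, ∀ x2 ∈ D, ∀ t s : ℝ, 0 < s → t/2 ≤ s → s ≤ t → t ≤ r0 →
      ‖x1 - x2‖ ≤ t → |Avg x1 t - Avg x2 s| ≤ Q * t ^ σ := by
    intro x1 hx1 x2 hx2 t s hs hts hst htr0 hxx
    have ht0 : 0 < t := lt_of_lt_of_le hs hst
    have h1 : closedBall (Z x1 t) (c*t) ⊆ D ∩ ball x1 t := hZ x1 t hx1 ht0 htr0
    have h2 : closedBall (Z x2 s) (c*s) ⊆ D ∩ ball x2 s := hZ x2 s hx2 hs (le_trans hst htr0)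
    have hd : ∀ u ∈ closedBall (Z x1 t) (c*t), ∀ w ∈ closedBall (Z x2 s) (c*s),
        ‖u - w‖ ≤ 3*t := by
      intro u hu w hw
      have hu' : dist u x1 < t := mem_ball.mp (h1 hu).2
      have hw' : dist w x2 < s := mem_ball.mp (h2 hw).2
      have : ‖u - w‖ ≤ ‖u - x1‖ + ‖x1 - x2‖ + ‖x2 - w‖ := by
        have e1 : u - w = (u - x1) + (x1 - x2) + (x2 - w) := by abel
        rw [e1]
        exact (norm_add_le _ _).trans (by gcongr; exact norm_add_le _ _)
      rw [dist_eq_norm] at hu' hw'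
      have hw'' : ‖x2 - w‖ < s := by rwa [norm_sub_rev]
      linarith
    have hmain := avg_diff_le hp1 he hcont hIGt hIGle (by positivity : (0:ℝ) < c*t)
      (by positivity : (0:ℝ) < c*s) (by positivity : (0:ℝ) ≤ 3*t)
      (h1.trans inter_subset_left) (h2.trans inter_subset_left) hd
    rw [vol_cball _ (by positivity : (0:ℝ) ≤ c*t), vol_cball _ (by positivity : (0:ℝ) ≤ c*s)]
      at hmain
    rw [hAvg]
    beta_reduce
    rw [vol_cball _ (by positivity : (0:ℝ) ≤ c*t), vol_cball _ (by positivity : (0:ℝ) ≤ c*s)]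
    refine hmain.trans ?_
    -- numerical estimate
    rw [← Real.div_rpow (by positivity) (by positivity)]
    have hden1 : ((c/2)*t)^n ≤ (c*t)^n := by
      apply pow_le_pow_left₀ (by positivity)
      nlinarith
    have hden2 : ((c/2)*t)^n ≤ (c*s)^n := by
      apply pow_le_pow_left₀ (by positivity)
      nlinarith
    have hfrac : (3*t)^e * IGr / (((c*t)^n*V1) * ((c*s)^n*V1)) ≤ Q0 * t^(e - 2*(n:ℝ)) := by
      have hnum : (3*t)^e = 3^e * t^e := Real.mul_rpow (by norm_num) ht0.le
      have hstep1 : (3*t)^e * IGr / (((c*t)^n*V1) * ((c*s)^n*V1)) ≤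
          (3*t)^e * IGr / ((((c/2)*t)^n*V1) * (((c/2)*t)^n*V1)) := by
        apply div_le_div_of_nonneg_left _ (by positivity) _
        · have h3 : (0:ℝ) < (3*t)^e := Real.rpow_pos_of_pos (by linarith) _
          positivity
        · gcongr
      refine hstep1.trans (le_of_eq ?_)
      have htn : ((c/2)*t)^n = (c/2)^n * t^n := mul_pow _ _ _
      have ht2n : (t:ℝ)^(n:ℕ) * t^(n:ℕ) = t^(2*(n:ℝ)) := by
        rw [← Real.rpow_natCast t n, ← Real.rpow_add ht0]
        congr 1; ring
      have hrs : t^(e - 2*(n:ℝ)) = t^e / t^(2*(n:ℝ)) := Real.rpow_sub ht0 _ _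
      rw [hnum, htn, hrs, ← ht2n]
      have htn0 : (0:ℝ) < t^(n:ℕ) := by positivity
      have hcn0 : (0:ℝ) < (c/2)^n := by positivity
      rw [hQ0def]
      field_simp
    calc ((3*t)^e * IGr / (((c*t)^n*V1) * ((c*s)^n*V1))) ^ (1/p)
        ≤ (Q0 * t^(e - 2*(n:ℝ))) ^ (1/p) := by
          apply Real.rpow_le_rpow _ hfrac (by positivity)
          have h3 : (0:ℝ) < (3*t)^e := Real.rpow_pos_of_pos (by linarith) _
          positivity
      _ = Q * t ^ σ := by
          rw [Real.mul_rpow hQ00 (Real.rpow_nonneg ht0.le _), hQdef,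
            ← Real.rpow_mul ht0.le, hexp]
  -- geometric sum constant
  set κ : ℝ := (2⁻¹ : ℝ) ^ σ with hκdef
  have hκ0 : 0 ≤ κ := Real.rpow_nonneg (by norm_num) _
  have hκ1 : κ < 1 := Real.rpow_lt_one (by norm_num) (by norm_num) hσ0
  set S : ℝ := Q * (1 - κ)⁻¹ with hSdef
  have hS0 : 0 ≤ S := by
    have : 0 < 1 - κ := by linarith
    rw [hSdef]; positivity
  -- point vs average bound
  have hpt : ∀ x ∈ D, ∀ r : ℝ, 0 < r → r ≤ r0 → |f x - Avg x r| ≤ S * r ^ σ := by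
    intro x hx r hr hrr0
    set t : ℕ → ℝ := fun k => r * (2⁻¹:ℝ)^k with htdef
    have ht0 : ∀ k, 0 < t k := fun k => by rw [htdef]; positivity
    have htr : ∀ k, t k ≤ r := by
      intro k
      rw [htdef]
      have h1 : ((2:ℝ)⁻¹)^k ≤ 1 := pow_le_one₀ (by norm_num) (by norm_num)
      nlinarith
    have htr0 : ∀ k, t k ≤ r0 := fun k => (htr k).trans hrr0
    have htsucc : ∀ k, t (k+1) = t k / 2 := by
      intro k
      rw [htdef]
      simp only [pow_succ]
      ring
    have hterm : ∀ k, |Avg x (t k) - Avg x (t (k+1))| ≤ Q * (t k)^σ := by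
      intro k
      apply hstep x hx x hx (t k) (t (k+1)) (ht0 _) (le_of_eq (htsucc k).symm)
        (by rw [htsucc]; linarith [ht0 k]) (htr0 k)
      simp [sub_self, (ht0 k).le]
    have htpow : ∀ k, (t k)^σ = r^σ * κ^k := by
      intro k
      rw [htdef]
      rw [Real.mul_rpow hr.le (by positivity), ← Real.rpow_natCast (2⁻¹:ℝ) k,
        ← Real.rpow_mul (by norm_num), mul_comm (k:ℝ) σ, Real.rpow_mul (by norm_num),
        Real.rpow_natCast, hκdef]
    have htel : ∀ m : ℕ, |Avg x (t 0) - Avg x (t m)| ≤ S * r^σ := by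
      intro m
      have h1 := dist_le_range_sum_dist (fun k => Avg x (t k)) m
      simp only [Real.dist_eq] at h1
      have h2 : ∑ i ∈ Finset.range m, |Avg x (t i) - Avg x (t (i+1))| ≤
          ∑ i ∈ Finset.range m, Q * r^σ * κ^i := by
        apply Finset.sum_le_sum
        intro i _
        calc |Avg x (t i) - Avg x (t (i+1))| ≤ Q * (t i)^σ := hterm i
          _ = Q * r^σ * κ^i := by rw [htpow]; ring
      have h3 : ∑ i ∈ Finset.range m, Q * r^σ * κ^i ≤ Q * r^σ * (1-κ)⁻¹ := by
        rw [← Finset.mul_sum]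
        apply mul_le_mul_of_nonneg_left (gsum hκ0 hκ1 m) (by positivity)
      calc |Avg x (t 0) - Avg x (t m)| ≤ _ := h1
        _ ≤ Q * r^σ * (1-κ)⁻¹ := le_trans h2 h3
        _ = S * r^σ := by rw [hSdef]; ring
    refine le_of_forall_pos_le_add ?_
    intro ε hε
    have hcx := hcont x hx
    rw [Metric.continuousWithinAt_iff] at hcx
    obtain ⟨δ', hδ'0, hδ'⟩ := hcx ε hε
    obtain ⟨m, hm⟩ := exists_pow_lt_of_lt_one (show (0:ℝ) < δ'/r by positivity)
      (show (2⁻¹:ℝ) < 1 by norm_num)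
    have htmδ : t m < δ' := by
      rw [htdef]
      calc r * (2⁻¹:ℝ)^m < r * (δ'/r) := by
            apply mul_lt_mul_of_pos_left hm hr
        _ = δ' := by field_simp
    have hBm := hZ x (t m) hx (ht0 m) (htr0 m)
    have hvB' : 0 < (volume (closedBall (Z x (t m)) (c * t m))).toReal :=
      ENNReal.toReal_pos (measure_closedBall_pos volume _ (mul_pos hc0 (ht0 m))).ne'
        measure_closedBall_lt_top.ne
    have hfB' : ContinuousOn f (closedBall (Z x (t m)) (c * t m)) :=
      hcont.mono (hBm.trans inter_subset_left)
    have hintB' : IntegrableOn f (closedBall (Z x (t m)) (c * t m)) :=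
      hfB'.integrableOn_compact (isCompact_closedBall _ _)
    have hptb : ∀ u ∈ closedBall (Z x (t m)) (c * t m), |f u - f x| ≤ ε := by
      intro u hu
      have h1 : dist u x < δ' := lt_trans (mem_ball.mp (hBm hu).2) htmδ
      have := hδ' (hBm hu).1 h1
      rw [Real.dist_eq] at this
      exact this.le
    have havg : |Avg x (t m) - f x| ≤ ε := by
      rw [hAvg]
      beta_reduce
      set B' := closedBall (Z x (t m)) (c * t m) with hB'def
      have hconst : IntegrableOn (fun _ : Euc n => f x) B' :=
        integrableOn_const measure_closedBall_lt_top.ne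
      have hsplit : ∫ u in B', (f u - f x) =
          (∫ u in B', f u) - (volume B').toReal * f x := by
        rw [integral_sub hintB' hconst, setIntegral_const, smul_eq_mul, measureReal_def]
      have heq : (volume B').toReal⁻¹ * (∫ u in B', f u) - f x =
          (volume B').toReal⁻¹ * ∫ u in B', (f u - f x) := by
        rw [hsplit, mul_sub]
        field_simp
      rw [heq, abs_mul, abs_of_pos (inv_pos.mpr hvB')]
      have h1 : |∫ u in B', (f u - f x)| ≤ ∫ u in B', |f u - f x| := by
        simpa [Real.norm_eq_abs] using norm_integral_le_integral_norm
          (μ := volume.restrict B') (fun u => f u - f x)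
      have h2 : ∫ u in B', |f u - f x| ≤ ∫ _u in B', ε := by
        apply setIntegral_mono_on _ _ measurableSet_closedBall hptb
        · exact ((hfB'.sub continuous_const.continuousOn).abs).integrableOn_compact
            (isCompact_closedBall _ _)
        · exact integrableOn_const measure_closedBall_lt_top.ne
      have h3 : ∫ _u in B', ε = (volume B').toReal * ε := by
        rw [setIntegral_const, smul_eq_mul, measureReal_def]
      calc (volume B').toReal⁻¹ * |∫ u in B', (f u - f x)|
          ≤ (volume B').toReal⁻¹ * ((volume B').toReal * ε) := by
            apply mul_le_mul_of_nonneg_left _ (inv_pos.mpr hvB').le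
            rw [← h3]; exact le_trans h1 h2
        _ = ε := by field_simp
    have ht00 : t 0 = r := by rw [htdef]; simp
    have htel' := htel m
    rw [ht00] at htel'
    calc |f x - Avg x r| ≤ |f x - Avg x (t m)| + |Avg x (t m) - Avg x r| :=
          abs_sub_le _ _ _
      _ ≤ ε + S * r^σ := by
          apply add_le_add
          · rw [abs_sub_comm]; exact havg
          · rw [abs_sub_comm]; exact htel'
      _ = S * r^σ + ε := add_comm _ _
  -- uniform bound on f over D
  set MB : ℝ := IL.toReal^(1/p) / ((c*r0)^n*V1)^(1/p) with hMBdef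
  have hMB0 : 0 ≤ MB := by
    rw [hMBdef]
    apply div_nonneg (Real.rpow_nonneg ENNReal.toReal_nonneg _)
      (Real.rpow_nonneg (by positivity) _)
  set M : ℝ := S * r0^σ + MB with hMdef
  have hM0 : 0 ≤ M := by
    rw [hMdef]
    have := Real.rpow_nonneg hr00.le σ
    positivity
  have hM : ∀ x ∈ D, |f x| ≤ M := by
    intro x hx
    have h1 := hpt x hx r0 hr00 le_rfl
    have hb := hZ x r0 hx hr00 le_rfl
    have h2 := avg_abs_le hp1 hcont hILt le_rfl (by positivity : (0:ℝ) < c*r0)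
      (hb.trans inter_subset_left)
    rw [vol_cball _ (by positivity : (0:ℝ) ≤ c*r0)] at h2
    have h2' : |Avg x r0| ≤ MB := by
      rw [hAvg]; beta_reduce
      rw [vol_cball _ (by positivity : (0:ℝ) ≤ c*r0)]
      exact h2
    calc |f x| = |(f x - Avg x r0) + Avg x r0| := by congr 1; ring
      _ ≤ |f x - Avg x r0| + |Avg x r0| := abs_add_le _ _
      _ ≤ S * r0^σ + MB := add_le_add h1 h2'
      _ = M := hMdef.symm
  -- final constant
  set K : ℝ := max (2*S + Q) (2*M / r0^γ) with hKdef
  have hK0 : 0 ≤ K := le_trans (by positivity) (le_max_left _ _)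
  refine ⟨K, hK0, ?_⟩
  intro x hx y hy
  rcases eq_or_ne x y with rfl | hxy
  · simp only [sub_self, abs_zero, norm_zero]
    rw [Real.zero_rpow (ne_of_gt hγ0), mul_zero]
  · have hr0 : 0 < ‖x - y‖ := by rw [norm_pos_iff]; exact sub_ne_zero.mpr hxy
    have hrγ : 0 ≤ ‖x - y‖ ^ γ := Real.rpow_nonneg hr0.le _
    by_cases hrr0 : ‖x - y‖ ≤ r0
    · have h1 := hpt x hx ‖x - y‖ hr0 hrr0
      have h2 := hpt y hy ‖x - y‖ hr0 hrr0
      have h3 := hstep x hx y hy ‖x - y‖ ‖x - y‖ hr0 (by linarith) le_rfl hrr0 le_rfl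
      have hsum : |f x - f y| ≤ (2*S + Q) * ‖x - y‖^σ := by
        have t1 : |f x - f y| ≤ |f x - Avg x ‖x - y‖| + |Avg x ‖x - y‖ - f y| :=
          abs_sub_le _ _ _
        have t2 : |Avg x ‖x - y‖ - f y| ≤ |Avg x ‖x - y‖ - Avg y ‖x - y‖| +
            |Avg y ‖x - y‖ - f y| := abs_sub_le _ _ _
        have t3 : |Avg y ‖x - y‖ - f y| = |f y - Avg y ‖x - y‖| := abs_sub_comm _ _
        nlinarith [h1, h2, h3]
      have hσγ : ‖x - y‖^σ ≤ ‖x - y‖^γ :=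
        Real.rpow_le_rpow_of_exponent_ge hr0 (le_trans hrr0 hr01) (le_of_lt hγσ)
      calc |f x - f y| ≤ (2*S + Q) * ‖x - y‖^σ := hsum
        _ ≤ (2*S + Q) * ‖x - y‖^γ := by
            apply mul_le_mul_of_nonneg_left hσγ (by positivity)
        _ ≤ K * ‖x - y‖^γ := by
            apply mul_le_mul_of_nonneg_right (le_max_left _ _) hrγ
    · push_neg at hrr0
      have h2M : |f x - f y| ≤ 2*M := by
        have hx' := hM x hx
        have hy' := hM y hy
        calc |f x - f y| = |f x + (- f y)| := by rw [sub_eq_add_neg]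
          _ ≤ |f x| + |(- f y)| := abs_add_le _ _
          _ = |f x| + |f y| := by rw [abs_neg]
          _ ≤ 2*M := by linarith
      have hr0γ : r0^γ ≤ ‖x - y‖^γ := Real.rpow_le_rpow hr00.le hrr0.le hγ0.le
      have hbig : 2*M ≤ (2*M / r0^γ) * ‖x - y‖^γ := by
        rw [div_mul_eq_mul_div, le_div_iff₀ (Real.rpow_pos_of_pos hr00 γ)]
        apply mul_le_mul_of_nonneg_left hr0γ (by positivity)
      calc |f x - f y| ≤ 2*M := h2M
        _ ≤ (2*M / r0^γ) * ‖x - y‖^γ := hbig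
        _ ≤ K * ‖x - y‖^γ := mul_le_mul_of_nonneg_right (le_max_right _ _) hrγ

end
end
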